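/- arXiv:2510.00832 — 6 statements merged into one kernel-verified Lean document; each statement's English description precedes it below -/
import Mathlib

section
/- Let G be a finite undirected graph (possibly mixed) and let G' be obtained from G by bypassing a vertex v (i.e., deleting v and adding an edge {u,w} for every path (u,v,w) in G, unless the edge is already present). Then for any set X ⊆ V(G)\{v} and any vertices s, t ∈ V(G)\(X ∪ {v}), there is a path from s to t in G − X if and only if there is a path from s to t in G' − X. -/
variable {V : Type*}

/-- Delete a vertex set `X` from `G`: keep only edges with both endpoints outside `X`. -/
def SimpleGraph.del (G : SimpleGraph V) (X : Set V) : SimpleGraph V where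
  Adj u v := G.Adj u v ∧ u ∉ X ∧ v ∉ X
  symm := ⟨fun u v h => ⟨h.1.symm, h.2.2, h.2.1⟩⟩
  loopless := ⟨fun v h => G.loopless.irrefl v h.1⟩

/-- Bypassing vertex `v₀` in `G`: delete `v₀` and for every path `(u, v₀, w)` add the
edge `{u, w}` (unless already present). -/
def SimpleGraph.bypass (G : SimpleGraph V) (v₀ : V) : SimpleGraph V where
  Adj u w := u ≠ w ∧ u ≠ v₀ ∧ w ≠ v₀ ∧ (G.Adj u w ∨ (G.Adj u v₀ ∧ G.Adj v₀ w))
  symm := ⟨fun u w h => ⟨h.1.symm, h.2.2.1, h.2.1, by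
    rcases h.2.2.2 with h' | h'
    · exact Or.inl h'.symm
    · exact Or.inr ⟨h'.2.symm, h'.1.symm⟩⟩⟩
  loopless := ⟨fun v h => h.1 rfl⟩

private lemma fwd_aux (G : SimpleGraph V) (v₀ : V) (X : Set V) {t : V} (ht' : t ≠ v₀) :
    ∀ n, ∀ (s : V), ∀ p : (G.del X).Walk s t, p.length ≤ n → s ≠ v₀ →
      ((G.bypass v₀).del X).Reachable s t := by
  intro n
  induction n with
  | zero =>
    intro s p hp _
    have := p.eq_of_length_eq_zero (Nat.le_zero.mp hp)
    exact this ▸ SimpleGraph.Reachable.refl _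
  | succ n ih =>
    intro s p hp hs
    cases p with
    | nil => exact SimpleGraph.Reachable.refl _
    | cons h q =>
      rename_i b
      by_cases hb : v₀ = b
      · subst hb
        cases q with
        | nil => exact absurd rfl ht'
        | cons h' q' =>
          rename_i c
          have hc : c ≠ v₀ := fun hcv => (hcv ▸ h'.1).ne rfl
          simp only [SimpleGraph.Walk.length_cons] at hp
          by_cases hcs : c = s
          · exact hcs ▸ ih c q' (by omega) hc
          · have hadj : ((G.bypass v₀).del X).Adj s c :=
              ⟨⟨fun h'' => hcs h''.symm, hs, hc, Or.inr ⟨h.1, h'.1⟩⟩, h.2.1, h'.2.2⟩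
            exact hadj.reachable.trans (ih c q' (by omega) hc)
      · have hadj : ((G.bypass v₀).del X).Adj s b :=
          ⟨⟨h.1.ne, hs, Ne.symm hb, Or.inl h.1⟩, h.2.1, h.2.2⟩
        simp only [SimpleGraph.Walk.length_cons] at hp
        exact hadj.reachable.trans (ih b q (by omega) (Ne.symm hb))

/-- for `X ⊆ V(G) \ {v₀}` and `s, t ∉ X ∪ {v₀}`, there is a path from `s`
to `t` in `G − X` iff there is one in `G' − X`, where `G'` is obtained by bypassing `v₀`. -/
theorem bypass_reachable_iff (G : SimpleGraph V) (v₀ : V) (X : Set V) (hX : v₀ ∉ X)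
    (s t : V) (hs : s ∉ X) (ht : t ∉ X) (hs' : s ≠ v₀) (ht' : t ≠ v₀) :
    (G.del X).Reachable s t ↔ ((G.bypass v₀).del X).Reachable s t := by
  constructor
  · rintro ⟨p⟩
    exact fwd_aux G v₀ X ht' p.length s p le_rfl hs'
  · rintro ⟨p⟩
    clear hs ht hs' ht'
    induction p with
    | nil => exact SimpleGraph.Reachable.refl _
    | cons h q ih =>
      rcases h.1.2.2.2 with h' | ⟨h1, h2⟩
      · exact (SimpleGraph.Adj.reachable (G := G.del X) ⟨h', h.2.1, h.2.2⟩).trans ih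
      · exact ((SimpleGraph.Adj.reachable (G := G.del X) ⟨h1, h.2.1, hX⟩).trans
          (SimpleGraph.Adj.reachable ⟨h2, hX, h.2.2⟩)).trans ih
end

section
/- Let G_B and H_B be boundaried graphs sharing boundary B. Then the minimum vertex cover size of the glued graph G ⊕ H equals the minimum over all subsets B' ⊆ B of |B'| + OPT_VC(G − B') + OPT_VC(H − B'), where OPT_VC denotes the minimum size of a vertex cover. -/
variable {V : Type*}

/-- `S` is a vertex cover of `G`. -/
def IsVC (G : SimpleGraph V) (S : Set V) : Prop :=
  ∀ ⦃u v⦄, G.Adj u v → u ∈ S ∨ v ∈ S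

/-- The minimum size of a vertex cover. -/
noncomputable def optVC (G : SimpleGraph V) : ℕ :=
  sInf {n | ∃ S : Finset V, IsVC G ↑S ∧ S.card = n}

lemma optVC_le {G : SimpleGraph V} {S : Finset V} (h : IsVC G ↑S) : optVC G ≤ S.card :=
  Nat.sInf_le ⟨S, h, rfl⟩

lemma optVC_exists [Fintype V] (G : SimpleGraph V) :
    ∃ S : Finset V, IsVC G ↑S ∧ S.card = optVC G := by
  have hne : {n | ∃ S : Finset V, IsVC G ↑S ∧ S.card = n}.Nonempty :=
    ⟨Finset.univ.card, Finset.univ, fun u _ _ => Or.inl (by simp), rfl⟩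
  exact Nat.sInf_mem hne

/-- the minimum vertex cover size of the glued graph `G ⊕ H` equals the
minimum over all `B' ⊆ B` of `|B'| + OPT_VC(G − B') + OPT_VC(H − B')`. -/
theorem glued_optVC [Fintype V] [DecidableEq V] (G H : SimpleGraph V) (VG VH B : Set V)
    (hG : ∀ ⦃u v⦄, G.Adj u v → u ∈ VG ∧ v ∈ VG)
    (hH : ∀ ⦃u v⦄, H.Adj u v → u ∈ VH ∧ v ∈ VH)
    (hB : VG ∩ VH = B) :
    optVC (G ⊔ H) =
      sInf {n | ∃ B' : Finset V, ↑B' ⊆ B ∧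
        n = B'.card + optVC (G.del ↑B') + optVC (H.del ↑B')} := by
  classical
  apply le_antisymm
  · -- LHS ≤ RHS
    have hne : {n | ∃ B' : Finset V, ↑B' ⊆ B ∧
        n = B'.card + optVC (G.del ↑B') + optVC (H.del ↑B')}.Nonempty :=
      ⟨_, ∅, by simp, rfl⟩
    obtain ⟨B', hBB, hEq⟩ := Nat.sInf_mem hne
    rw [hEq]
    obtain ⟨SG, hSG, hSGc⟩ := optVC_exists (G.del ↑B')
    obtain ⟨SH, hSH, hSHc⟩ := optVC_exists (H.del ↑B')
    have hcov : IsVC (G ⊔ H) ↑(B' ∪ SG ∪ SH) := by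
      intro u v huv
      by_cases hu : u ∈ B'
      · left; simp [hu]
      by_cases hv : v ∈ B'
      · right; simp [hv]
      rcases huv with h | h
      · rcases hSG ⟨h, by simpa using hu, by simpa using hv⟩ with h' | h'
        · left; simp at h' ⊢; tauto
        · right; simp at h' ⊢; tauto
      · rcases hSH ⟨h, by simpa using hu, by simpa using hv⟩ with h' | h'
        · left; simp at h' ⊢; tauto
        · right; simp at h' ⊢; tauto
    calc optVC (G ⊔ H) ≤ (B' ∪ SG ∪ SH).card := optVC_le hcov
      _ ≤ B'.card + SG.card + SH.card :=
        (Finset.card_union_le _ _).trans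
          (Nat.add_le_add_right (Finset.card_union_le _ _) _)
      _ = B'.card + optVC (G.del ↑B') + optVC (H.del ↑B') := by rw [hSGc, hSHc]
  · -- RHS ≤ LHS
    obtain ⟨S, hS, hSc⟩ := optVC_exists (G ⊔ H)
    set B' : Finset V := S.filter (· ∈ B) with hB'def
    set SG : Finset V := S.filter (fun v => v ∈ VG ∧ v ∉ B') with hSGdef
    set SH : Finset V := S.filter (fun v => v ∈ VH ∧ v ∉ B') with hSHdef
    have hBB : (B' : Set V) ⊆ B := by
      intro v hv
      simp [hB'def] at hv
      exact hv.2
    have hGcov : IsVC (G.del ↑B') ↑SG := by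
      rintro u v ⟨huv, hu, hv⟩
      rcases hS (Or.inl huv) with h | h
      · left; simp [hSGdef]; exact ⟨by simpa using h, (hG huv).1, by simpa using hu⟩
      · right; simp [hSHdef, hSGdef]; exact ⟨by simpa using h, (hG huv).2, by simpa using hv⟩
    have hHcov : IsVC (H.del ↑B') ↑SH := by
      rintro u v ⟨huv, hu, hv⟩
      rcases hS (Or.inr huv) with h | h
      · left; simp [hSHdef]; exact ⟨by simpa using h, (hH huv).1, by simpa using hu⟩
      · right; simp [hSHdef]; exact ⟨by simpa using h, (hH huv).2, by simpa using hv⟩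
    have d1 : Disjoint SG SH := by
      rw [Finset.disjoint_left]
      intro v hv1 hv2
      simp [hSGdef] at hv1
      simp [hSHdef] at hv2
      have hvB : v ∈ B := hB ▸ ⟨hv1.2.1, hv2.2.1⟩
      exact hv1.2.2 (Finset.mem_filter.mpr ⟨hv1.1, hvB⟩)
    have d2 : Disjoint B' (SG ∪ SH) := by
      rw [Finset.disjoint_left]
      intro v hv1 hv2
      rcases Finset.mem_union.mp hv2 with h | h
      · exact ((Finset.mem_filter.mp h).2.2) hv1
      · exact ((Finset.mem_filter.mp h).2.2) hv1
    have hsub : B' ∪ (SG ∪ SH) ⊆ S := by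
      intro v hv
      rcases Finset.mem_union.mp hv with h | h
      · exact Finset.mem_of_mem_filter v h
      · rcases Finset.mem_union.mp h with h | h
        · exact Finset.mem_of_mem_filter v h
        · exact Finset.mem_of_mem_filter v h
    have hcard : B'.card + SG.card + SH.card ≤ S.card := by
      have h1 : (B' ∪ (SG ∪ SH)).card = B'.card + (SG.card + SH.card) := by
        rw [Finset.card_union_of_disjoint d2, Finset.card_union_of_disjoint d1]
      calc B'.card + SG.card + SH.card = (B' ∪ (SG ∪ SH)).card := by rw [h1]; ring
        _ ≤ S.card := Finset.card_le_card hsub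
    refine le_trans (Nat.sInf_le ⟨B', hBB, rfl⟩) ?_
    calc B'.card + optVC (G.del ↑B') + optVC (H.del ↑B')
        ≤ B'.card + SG.card + SH.card := by
          have := optVC_le hGcov
          have := optVC_le hHcov
          omega
      _ ≤ S.card := hcard
      _ = optVC (G ⊔ H) := hSc
end

section
/- Let G be a bipartite graph with parts L and R and a perfect matching M. Orient every edge of G from L to R, and additionally orient each matching edge of M also from R to L (so M-edges are bidirected). Let S be a vertex cover of G and M' ⊆ M the set of matching edges with both endpoints in S. Let C contain exactly one endpoint of each edge in M'. Then in the resulting directed graph, every directed path that starts at a vertex of (S ∩ R)\C and ends at a vertex of (S ∩ L)\C contains a vertex of C. -/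
/-! Every vertex reachable from `(S ∩ R) \ C` avoiding `C` lies in `((S ∩ R) \ C) ∪ (L \ S)`:
from `L \ S` every arc goes to `R` and, `S` being a cover, into `S`; from `(S ∩ R) \ C` the only
arc is the matching arc to `m a`, and `m a ∈ S` would force exactly one of `a`, `m a` into `C`.
No vertex of `(S ∩ L) \ C` lies in that set. -/

variable {V : Type*}

theorem Relation.ReflTransGen.mem_of_isClosed {α : Type*} {r : α → α → Prop} {P : Set α}
    {a b : α} (h : Relation.ReflTransGen r a b) (ha : a ∈ P)
    (hP : ∀ ⦃x y⦄, x ∈ P → r x y → y ∈ P) : b ∈ P := by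
  induction h with
  | refl => exact ha
  | tail _ hxy ih => exact hP ih hxy

def matchingOrientation (G : SimpleGraph V) (L R : Set V) (m : V → V) (a b : V) : Prop :=
  (G.Adj a b ∧ a ∈ L ∧ b ∈ R) ∨ (G.Adj a b ∧ a ∈ R ∧ b ∈ L ∧ m a = b)

section
variable {G : SimpleGraph V} {L R : Set V} {m : V → V} {S C : Set V} {a b : V}

theorem matchingOrientation.mem_left_diff_of_mem_right (hdisj : Disjoint L R)
    (hC : ∀ v, v ∈ S → m v ∈ S → (v ∈ C ↔ m v ∉ C))
    (hab : matchingOrientation G L R m a b) (ha : a ∈ (S ∩ R) \ C) (hb : b ∉ C) :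
    b ∈ L \ S := by
  obtain ⟨⟨haS, haR⟩, haC⟩ := ha
  rcases hab with ⟨-, haL, -⟩ | ⟨-, -, hbL, rfl⟩
  · exact absurd haR (hdisj.notMem_of_mem_left haL)
  · exact ⟨hbL, fun hbS => haC ((hC a haS hbS).mpr hb)⟩

theorem matchingOrientation.mem_right_diff_of_mem_left (hdisj : Disjoint L R) (hS : IsVC G S)
    (hab : matchingOrientation G L R m a b) (ha : a ∈ L \ S) (hb : b ∉ C) :
    b ∈ (S ∩ R) \ C := by
  obtain ⟨haL, haS⟩ := ha
  rcases hab with ⟨hadj, -, hbR⟩ | ⟨-, haR, -⟩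
  · exact ⟨⟨(hS hadj).resolve_left haS, hbR⟩, hb⟩
  · exact absurd haR (hdisj.notMem_of_mem_left haL)

end

theorem matching_cut_in_digraph_general (G : SimpleGraph V) (L R : Set V)
    (hdisj : Disjoint L R)
    (m : V → V)
    (S : Set V) (hS : IsVC G S)
    (C : Set V)
    (hC2 : ∀ v, v ∈ S → m v ∈ S → (v ∈ C ↔ m v ∉ C)) :
    ∀ s ∈ (S ∩ R) \ C, ∀ t ∈ (S ∩ L) \ C,
      ¬ Relation.ReflTransGen
        (fun a b => ((G.Adj a b ∧ a ∈ L ∧ b ∈ R) ∨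
            (G.Adj a b ∧ a ∈ R ∧ b ∈ L ∧ m a = b)) ∧ a ∉ C ∧ b ∉ C)
        s t := by
  intro s hs t ht hst
  have hreach : t ∈ (S ∩ R) \ C ∪ L \ S := by
    refine hst.mem_of_isClosed (Or.inl hs) ?_
    rintro a b (ha | ha) ⟨hab, -, hb⟩
    · exact Or.inr (matchingOrientation.mem_left_diff_of_mem_right hdisj hC2 hab ha hb)
    · exact Or.inl (matchingOrientation.mem_right_diff_of_mem_left hdisj hS hab ha hb)
  rcases hreach with ⟨⟨-, htR⟩, -⟩ | ⟨-, htS⟩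
  · exact hdisj.notMem_of_mem_left ht.1.2 htR
  · exact htS ht.1.1

/-- orient all edges of the bipartite graph `G` from `L` to `R`, and in
addition orient the perfect-matching edges (given by `m`) from `R` to `L`. If `S` is a
vertex cover, `M'` the matching edges with both endpoints in `S`, and `C` contains
exactly one endpoint of each `M'`-edge, then every directed path from `(S ∩ R) \ C` to
`(S ∩ L) \ C` contains a vertex of `C`. -/
theorem matching_cut_in_digraph (G : SimpleGraph V) (L R : Set V)
    (hdisj : Disjoint L R)
    (hbip : ∀ ⦃u v⦄, G.Adj u v → (u ∈ L ∧ v ∈ R) ∨ (u ∈ R ∧ v ∈ L))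
    (m : V → V) (hm : ∀ v, m (m v) = v ∧ m v ≠ v ∧ G.Adj v (m v))
    (S : Set V) (hS : IsVC G S)
    (C : Set V)
    (hC1 : ∀ v ∈ C, v ∈ S ∧ m v ∈ S)
    (hC2 : ∀ v, v ∈ S → m v ∈ S → (v ∈ C ↔ m v ∉ C)) :
    ∀ s ∈ (S ∩ R) \ C, ∀ t ∈ (S ∩ L) \ C,
      ¬ Relation.ReflTransGen
        (fun a b => ((G.Adj a b ∧ a ∈ L ∧ b ∈ R) ∨
            (G.Adj a b ∧ a ∈ R ∧ b ∈ L ∧ m a = b)) ∧ a ∉ C ∧ b ∉ C)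
        s t :=
  matching_cut_in_digraph_general G L R hdisj m S hS C hC2
end

section
/- Let G be a finite graph, B ⊆ V(G) with F = V(G)\B, such that G[F] is bipartite with bipartition (L,R) and perfect matching M. For B' ⊆ B, define conf(B') = OPT_VC(G[F] − N_{G,F}(B')) + |N_{G,F}(B')| − OPT_VC(G[F]). Then conf(B') ≥ 0, and conf(B') equals the minimum size of a vertex cover of G[F] containing N_{G,F}(B') minus |F|/2. -/
variable {V : Type*}

/-- The induced graph of `G` on a vertex set `F` (keeping the ambient vertex type). -/
def SimpleGraph.onSet (G : SimpleGraph V) (F : Set V) : SimpleGraph V where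
  Adj u v := G.Adj u v ∧ u ∈ F ∧ v ∈ F
  symm := ⟨fun u v h => ⟨h.1.symm, h.2.2, h.2.1⟩⟩
  loopless := ⟨fun v h => G.loopless.irrefl v h.1⟩

/-- with `G[F]` bipartite with bipartition `(L,R)` and perfect matching `m`,
and `N = N_{G,F}(B')`, the conflict `conf(B') = OPT_VC(G[F] − N) + |N| − OPT_VC(G[F])` is
nonnegative and equals the minimum size of a vertex cover of `G[F]` containing `N`,
minus `|F|/2`. -/
theorem conflict_characterization [DecidableEq V] (G : SimpleGraph V)
    (B F L R : Finset V) (hBF : Disjoint B F) (hLR : Disjoint L R) (hF : L ∪ R = F)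
    (hbip : ∀ ⦃u v⦄, u ∈ F → v ∈ F → G.Adj u v → (u ∈ L ∧ v ∈ R) ∨ (u ∈ R ∧ v ∈ L))
    (m : V → V)
    (hm : ∀ v ∈ F, m v ∈ F ∧ m (m v) = v ∧ m v ≠ v ∧ G.Adj v (m v))
    (B' : Finset V) (hB' : B' ⊆ B)
    (N : Finset V) (hN : ∀ x, x ∈ N ↔ x ∈ F ∧ ∃ b ∈ B', G.Adj b x) :
    0 ≤ (optVC (G.onSet (↑F \ ↑N)) : ℤ) + N.card - optVC (G.onSet ↑F) ∧
    (optVC (G.onSet (↑F \ ↑N)) : ℤ) + N.card - optVC (G.onSet ↑F) =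
      (sInf {n | ∃ S : Finset V, ↑S ⊆ (↑F : Set V) ∧ IsVC (G.onSet ↑F) ↑S ∧
        N ⊆ S ∧ S.card = n} : ℤ) - (F.card : ℤ) / 2 := by
  classical
  set H := G.onSet (↑F : Set V) with hHdef
  set H' := G.onSet ((↑F : Set V) \ ↑N) with hH'def
  set K : Set ℕ := {n | ∃ S : Finset V, ↑S ⊆ (↑F : Set V) ∧ IsVC H ↑S ∧
        N ⊆ S ∧ S.card = n} with hKdef
  have hNF : N ⊆ F := fun x hx => ((hN x).mp hx).1
  have hFVC : IsVC H (↑F : Set V) := fun u v h => Or.inl h.2.1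
  have hFVC' : IsVC H' (↑F : Set V) := fun u v h => Or.inl h.2.1.1
  -- nonemptiness of the three optimization sets
  have hne1 : {n | ∃ S : Finset V, IsVC H ↑S ∧ S.card = n}.Nonempty :=
    ⟨F.card, F, hFVC, rfl⟩
  have hne2 : {n | ∃ S : Finset V, IsVC H' ↑S ∧ S.card = n}.Nonempty :=
    ⟨F.card, F, hFVC', rfl⟩
  have hneK : K.Nonempty := ⟨F.card, F, subset_rfl, hFVC, hNF, rfl⟩
  -- lower bound: any vertex cover of H has size ≥ |F|/2
  have hlow : ∀ S : Finset V, IsVC H (↑S : Set V) → F.card ≤ 2 * S.card := by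
    intro S hS
    have hsub : F ⊆ (S ∩ F) ∪ (S ∩ F).image m := by
      intro v hv
      obtain ⟨hmF, hmm, -, hadj⟩ := hm v hv
      have hHadj : H.Adj v (m v) := ⟨hadj, by simpa using hv, by simpa using hmF⟩
      rcases hS hHadj with h | h
      · exact Finset.mem_union_left _ (Finset.mem_inter.mpr ⟨by simpa using h, hv⟩)
      · exact Finset.mem_union_right _ (Finset.mem_image.mpr
          ⟨m v, Finset.mem_inter.mpr ⟨by simpa using h, hmF⟩, hmm⟩)
    calc F.card ≤ ((S ∩ F) ∪ (S ∩ F).image m).card := Finset.card_le_card hsub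
      _ ≤ (S ∩ F).card + ((S ∩ F).image m).card := Finset.card_union_le _ _
      _ ≤ S.card + S.card :=
          Nat.add_le_add (Finset.card_le_card Finset.inter_subset_left)
            (le_trans Finset.card_image_le
              (Finset.card_le_card Finset.inter_subset_left))
      _ = 2 * S.card := (two_mul _).symm
  -- m maps L into R and R into L
  have hLF : L ⊆ F := by intro x hx; rw [← hF]; exact Finset.mem_union_left _ hx
  have hRF : R ⊆ F := by intro x hx; rw [← hF]; exact Finset.mem_union_right _ hx
  have hmLR : ∀ v ∈ L, m v ∈ R := by
    intro v hv
    obtain ⟨hmF, -, -, hadj⟩ := hm v (hLF hv)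
    rcases hbip (hLF hv) hmF hadj with h | h
    · exact h.2
    · exact absurd hv (Finset.disjoint_right.mp hLR h.1)
  have hmRL : ∀ v ∈ R, m v ∈ L := by
    intro v hv
    obtain ⟨hmF, -, -, hadj⟩ := hm v (hRF hv)
    rcases hbip (hRF hv) hmF hadj with h | h
    · exact absurd hv (Finset.disjoint_left.mp hLR h.1)
    · exact h.2
  have hmInj : ∀ a ∈ F, ∀ b ∈ F, m a = m b → a = b := by
    intro a ha b hb hab
    have h1 := (hm a ha).2.1
    have h2 := (hm b hb).2.1
    rw [← h1, hab, h2]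
  have hLR_card : L.card = R.card := by
    apply le_antisymm
    · exact Finset.card_le_card_of_injOn m hmLR
        (fun a ha b hb => hmInj a (hLF ha) b (hLF hb))
    · exact Finset.card_le_card_of_injOn m hmRL
        (fun a ha b hb => hmInj a (hRF ha) b (hRF hb))
  have hFcard : F.card = L.card + R.card := by
    rw [← hF, Finset.card_union_of_disjoint hLR]
  -- L is a vertex cover of H
  have hLVC : IsVC H (↑L : Set V) := by
    intro u v h
    rcases hbip (by simpa using h.2.1) (by simpa using h.2.2) h.1 with hc | hc
    · exact Or.inl (by simpa using hc.1)
    · exact Or.inr (by simpa using hc.2)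
  -- 2 * optVC H = F.card
  have hkey1 : 2 * optVC H = F.card := by
    apply le_antisymm
    · have h1 : optVC H ≤ L.card := Nat.sInf_le ⟨L, hLVC, rfl⟩
      omega
    · obtain ⟨S, hSVC, hScard⟩ := Nat.sInf_mem hne1
      have := hlow S hSVC
      unfold optVC
      omega
  -- optVC H ≤ sInf K
  have hkey3 : optVC H ≤ sInf K := by
    obtain ⟨S, -, hSVC, -, hScard⟩ := Nat.sInf_mem hneK
    exact hScard ▸ Nat.sInf_le ⟨S, hSVC, rfl⟩
  -- optVC H' + N.card = sInf K
  have hkey2 : optVC H' + N.card = sInf K := by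
    apply le_antisymm
    · obtain ⟨S, hSF, hSVC, hNS, hScard⟩ := Nat.sInf_mem hneK
      have hVC' : IsVC H' (↑(S \ N) : Set V) := by
        intro u v h
        have hu : u ∉ N := by
          have := h.2.1.2; simpa using this
        have hv : v ∉ N := by
          have := h.2.2.2; simpa using this
        have hH : H.Adj u v := ⟨h.1, h.2.1.1, h.2.2.1⟩
        rcases hSVC hH with hc | hc
        · exact Or.inl (by simp only [Finset.coe_sdiff, Set.mem_diff]; exact ⟨hc, by simpa using hu⟩)
        · exact Or.inr (by simp only [Finset.coe_sdiff, Set.mem_diff]; exact ⟨hc, by simpa using hv⟩)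
      have h1 : optVC H' ≤ (S \ N).card := Nat.sInf_le ⟨S \ N, hVC', rfl⟩
      have h2 : (S \ N).card = S.card - N.card := Finset.card_sdiff_of_subset hNS
      have h3 : N.card ≤ S.card := Finset.card_le_card hNS
      omega
    · obtain ⟨S', hS'VC, hS'card⟩ := Nat.sInf_mem hne2
      have hS'opt : S'.card = optVC H' := hS'card
      set T : Finset V := (S' ∩ (F \ N)) ∪ N with hTdef
      have hTF : (↑T : Set V) ⊆ (↑F : Set V) := by
        intro x hx
        simp only [hTdef, Finset.coe_union, Set.mem_union, Finset.coe_inter,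
          Set.mem_inter_iff, Finset.coe_sdiff, Set.mem_diff] at hx
        rcases hx with h | h
        · exact h.2.1
        · simpa using hNF (by simpa using h)
      have hTVC : IsVC H (↑T : Set V) := by
        intro u v h
        by_cases hu : u ∈ N
        · exact Or.inl (by simp [hTdef, hu])
        by_cases hv : v ∈ N
        · exact Or.inr (by simp [hTdef, hv])
        have hH' : H'.Adj u v := ⟨h.1, ⟨h.2.1, by simpa using hu⟩,
          ⟨h.2.2, by simpa using hv⟩⟩
        rcases hS'VC hH' with hc | hc
        · refine Or.inl ?_
          simp only [hTdef, Finset.coe_union, Set.mem_union, Finset.coe_inter,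
            Set.mem_inter_iff, Finset.coe_sdiff, Set.mem_diff]
          exact Or.inl ⟨by simpa using hc, h.2.1, by simpa using hu⟩
        · refine Or.inr ?_
          simp only [hTdef, Finset.coe_union, Set.mem_union, Finset.coe_inter,
            Set.mem_inter_iff, Finset.coe_sdiff, Set.mem_diff]
          exact Or.inl ⟨by simpa using hc, h.2.2, by simpa using hv⟩
      have hNT : N ⊆ T := Finset.subset_union_right
      have h1 : sInf K ≤ T.card := Nat.sInf_le ⟨T, hTF, hTVC, hNT, rfl⟩
      have h2 : T.card ≤ (S' ∩ (F \ N)).card + N.card := Finset.card_union_le _ _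
      have h3 : (S' ∩ (F \ N)).card ≤ S'.card :=
        Finset.card_le_card Finset.inter_subset_left
      omega
  set KZ : Set ℤ := {n : ℤ | ∃ S : Finset V, ↑S ⊆ (↑F : Set V) ∧ IsVC H ↑S ∧
      N ⊆ S ∧ (S.card : ℤ) = n} with hKZdef
  have hbdd : BddBelow KZ := by
    refine ⟨0, fun x hx => ?_⟩
    obtain ⟨S, -, -, -, h⟩ := hx
    simp [← h]
  have hneZ : KZ.Nonempty := ⟨(F.card : ℤ), F, subset_rfl, hFVC, hNF, rfl⟩
  have hKZval : sInf KZ = ((sInf K : ℕ) : ℤ) := by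
    apply le_antisymm
    · apply csInf_le hbdd
      obtain ⟨S, h1, h2, h3, h4⟩ := Nat.sInf_mem hneK
      exact ⟨S, h1, h2, h3, by exact_mod_cast h4⟩
    · obtain ⟨S, h1, h2, h3, h4⟩ := Int.csInf_mem hneZ hbdd
      have hmem : S.card ∈ K := ⟨S, h1, h2, h3, rfl⟩
      have h5 := Nat.sInf_le hmem
      rw [← h4]
      exact_mod_cast h5
  rw [hKZval]
  refine ⟨by omega, by omega⟩
end

section
/- Let G be a finite undirected graph and T ⊆ V(G). Then there exists a (T,S)-minimum vertex cut closest to T for any S ⊆ V(G); more precisely, among all minimum vertex cuts between T and S there is a unique one X such that X is the unique (T,X)-minimum cut, equivalently there exist |X| vertex-disjoint paths from T to X and X is the minimum cut between T and S minimizing the set of vertices reachable from T after deletion. -/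
variable {V : Type*}

/-- `X` is a vertex cut between `A` and `B` (`X` may intersect `A` and `B`): no path
connects `A \ X` to `B \ X` in `G − X`. -/
def IsSep (G : SimpleGraph V) (A B X : Set V) : Prop :=
  ∀ a ∈ A \ X, ∀ b ∈ B \ X, ¬ (G.del X).Reachable a b

namespace ClosestCutAux

open SimpleGraph

lemma del_adj {G : SimpleGraph V} {X : Set V} {u v : V} :
    (G.del X).Adj u v ↔ G.Adj u v ∧ u ∉ X ∧ v ∉ X := Iff.rfl

lemma del_walk_not_mem {G : SimpleGraph V} {X : Set V} :
    ∀ ⦃a b : V⦄, (G.del X).Walk a b → a ∉ X → b ∉ X := by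
  intro a b w
  induction w with
  | nil => exact id
  | cons h _ ih => exact fun _ => ih h.2.2

lemma del_reach_not_mem {G : SimpleGraph V} {X : Set V} {a b : V}
    (h : (G.del X).Reachable a b) (ha : a ∉ X) : b ∉ X := by
  obtain ⟨w⟩ := h; exact del_walk_not_mem w ha

lemma del_mono {G : SimpleGraph V} {X Y : Set V} (hXY : X ⊆ Y) : G.del Y ≤ G.del X :=
  fun _ _ h => ⟨h.1, fun hu => h.2.1 (hXY hu), fun hv => h.2.2 (hXY hv)⟩

open Classical in
noncomputable def bd [Fintype V] (G : SimpleGraph V) (T : Set V) (A : Finset V) : Finset V :=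
  Finset.univ.filter (fun v => v ∉ A ∧ (v ∈ T ∨ ∃ u ∈ A, G.Adj u v))

lemma mem_bd [Fintype V] {G : SimpleGraph V} {T : Set V} {A : Finset V} {v : V} :
    v ∈ bd G T A ↔ v ∉ A ∧ (v ∈ T ∨ ∃ u ∈ A, G.Adj u v) := by
  classical
  simp [bd]

open Classical in
noncomputable def rset [Fintype V] (G : SimpleGraph V) (T : Set V) (X : Finset V) : Finset V :=
  Finset.univ.filter (fun v => ∃ a, a ∈ T ∧ a ∉ X ∧ (G.del ↑X).Reachable a v)

lemma mem_rset [Fintype V] {G : SimpleGraph V} {T : Set V} {X : Finset V} {v : V} :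
    v ∈ rset G T X ↔ ∃ a, a ∈ T ∧ a ∉ X ∧ (G.del ↑X).Reachable a v := by
  classical
  simp [rset]

/-- Reachability in `G − bd G T A` starting inside `A` stays inside `A`. -/
lemma stay [Fintype V] {G : SimpleGraph V} {T : Set V} {A : Finset V} :
    ∀ ⦃a b : V⦄, (G.del ↑(bd G T A)).Walk a b → a ∈ A → b ∈ A := by
  intro a b w
  induction w with
  | nil => exact id
  | @cons a c b h _ ih =>
    intro ha
    refine ih ?_
    by_contra hc
    exact h.2.2 (mem_bd.mpr ⟨hc, Or.inr ⟨a, ha, h.1⟩⟩)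

lemma stay' [Fintype V] {G : SimpleGraph V} {T : Set V} {A : Finset V} {a b : V}
    (h : (G.del ↑(bd G T A)).Reachable a b) (ha : a ∈ A) : b ∈ A := by
  obtain ⟨w⟩ := h; exact stay w ha

/-- If `A` avoids `S`, then `bd G T A` is a `(T,S)`-separator. -/
lemma bd_isSep [Fintype V] {G : SimpleGraph V} {T S : Set V} {A : Finset V}
    (hS : ∀ s ∈ S, s ∉ A) : IsSep G T S ↑(bd G T A) := by
  rintro a ⟨haT, haX⟩ b ⟨hbS, _⟩ hr
  have haA : a ∈ A := by
    by_contra h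
    exact haX (mem_bd.mpr ⟨h, Or.inl haT⟩)
  exact hS b hbS (stay' hr haA)

lemma rset_disj [Fintype V] {G : SimpleGraph V} {T : Set V} {X : Finset V} {v : V}
    (hv : v ∈ rset G T X) : v ∉ X := by
  obtain ⟨a, _, haX, hr⟩ := mem_rset.mp hv
  exact fun h => del_reach_not_mem hr haX h

lemma bd_rset_subset [Fintype V] {G : SimpleGraph V} {T : Set V} {X : Finset V} :
    bd G T (rset G T X) ⊆ X := by
  intro v hv
  obtain ⟨hvR, hcase⟩ := mem_bd.mp hv
  by_contra hvX
  rcases hcase with hT | ⟨u, hu, hadj⟩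
  · exact hvR (mem_rset.mpr ⟨v, hT, hvX, Reachable.refl v⟩)
  · obtain ⟨a, haT, haX, hr⟩ := mem_rset.mp hu
    have huX : u ∉ X := rset_disj hu
    have hedge : (G.del ↑X).Adj u v := ⟨hadj, huX, hvX⟩
    exact hvR (mem_rset.mpr ⟨a, haT, haX, hr.trans hedge.reachable⟩)

lemma rset_good [Fintype V] {G : SimpleGraph V} {T S : Set V} {X : Finset V}
    (hX : IsSep G T S ↑X) : ∀ s ∈ S, s ∉ rset G T X := by
  intro s hs hsR
  obtain ⟨a, haT, haX, hr⟩ := mem_rset.mp hsR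
  exact hX a ⟨haT, haX⟩ s ⟨hs, rset_disj hsR⟩ hr

section Submod

variable [Fintype V] [DecidableEq V] {G : SimpleGraph V} {T : Set V} {A B : Finset V}

lemma bd_union_subset : bd G T (A ∪ B) ⊆ bd G T A ∪ bd G T B := by
  intro v hv
  obtain ⟨hv1, hcase⟩ := mem_bd.mp hv
  have hvA : v ∉ A := fun h => hv1 (Finset.mem_union_left _ h)
  have hvB : v ∉ B := fun h => hv1 (Finset.mem_union_right _ h)
  rcases hcase with hT | ⟨u, hu, hadj⟩
  · exact Finset.mem_union_left _ (mem_bd.mpr ⟨hvA, Or.inl hT⟩)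
  · rcases Finset.mem_union.mp hu with h | h
    · exact Finset.mem_union_left _ (mem_bd.mpr ⟨hvA, Or.inr ⟨u, h, hadj⟩⟩)
    · exact Finset.mem_union_right _ (mem_bd.mpr ⟨hvB, Or.inr ⟨u, h, hadj⟩⟩)

lemma bd_inter_subset : bd G T (A ∩ B) ⊆ bd G T A ∪ bd G T B := by
  intro v hv
  obtain ⟨hv1, hcase⟩ := mem_bd.mp hv
  by_cases hvA : v ∈ A
  · have hvB : v ∉ B := fun h => hv1 (Finset.mem_inter.mpr ⟨hvA, h⟩)
    rcases hcase with hT | ⟨u, hu, hadj⟩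
    · exact Finset.mem_union_right _ (mem_bd.mpr ⟨hvB, Or.inl hT⟩)
    · exact Finset.mem_union_right _
        (mem_bd.mpr ⟨hvB, Or.inr ⟨u, (Finset.mem_inter.mp hu).2, hadj⟩⟩)
  · rcases hcase with hT | ⟨u, hu, hadj⟩
    · exact Finset.mem_union_left _ (mem_bd.mpr ⟨hvA, Or.inl hT⟩)
    · exact Finset.mem_union_left _
        (mem_bd.mpr ⟨hvA, Or.inr ⟨u, (Finset.mem_inter.mp hu).1, hadj⟩⟩)

lemma bd_inter_inter : bd G T (A ∩ B) ∩ bd G T (A ∪ B) ⊆ bd G T A ∩ bd G T B := by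
  intro v hv
  obtain ⟨hv1, hv2⟩ := Finset.mem_inter.mp hv
  obtain ⟨_, hcase⟩ := mem_bd.mp hv1
  obtain ⟨hvU, _⟩ := mem_bd.mp hv2
  have hvA : v ∉ A := fun h => hvU (Finset.mem_union_left _ h)
  have hvB : v ∉ B := fun h => hvU (Finset.mem_union_right _ h)
  rcases hcase with hT | ⟨u, hu, hadj⟩
  · exact Finset.mem_inter.mpr ⟨mem_bd.mpr ⟨hvA, Or.inl hT⟩, mem_bd.mpr ⟨hvB, Or.inl hT⟩⟩
  · obtain ⟨huA, huB⟩ := Finset.mem_inter.mp hu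
    exact Finset.mem_inter.mpr ⟨mem_bd.mpr ⟨hvA, Or.inr ⟨u, huA, hadj⟩⟩,
      mem_bd.mpr ⟨hvB, Or.inr ⟨u, huB, hadj⟩⟩⟩

lemma bd_submod :
    (bd G T (A ∩ B)).card + (bd G T (A ∪ B)).card ≤ (bd G T A).card + (bd G T B).card := by
  classical
  calc (bd G T (A ∩ B)).card + (bd G T (A ∪ B)).card
      = (bd G T (A ∩ B) ∪ bd G T (A ∪ B)).card + (bd G T (A ∩ B) ∩ bd G T (A ∪ B)).card :=
        (Finset.card_union_add_card_inter _ _).symm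
    _ ≤ (bd G T A ∪ bd G T B).card + (bd G T A ∩ bd G T B).card :=
        add_le_add (Finset.card_le_card (Finset.union_subset bd_inter_subset bd_union_subset))
          (Finset.card_le_card bd_inter_inter)
    _ = (bd G T A).card + (bd G T B).card := Finset.card_union_add_card_inter _ _

end Submod

lemma reach_split {G : SimpleGraph V} {X Y : Set V} :
    ∀ ⦃a b : V⦄, (G.del Y).Walk a b → a ∉ X →
      (∃ x, x ∈ X ∧ x ∉ Y ∧ (G.del Y).Reachable a x) ∨ (G.del (X ∪ Y)).Reachable a b := by
  intro a b w
  induction w with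
  | nil => exact fun _ => Or.inr (Reachable.refl _)
  | @cons a c b h _ ih =>
    intro ha
    by_cases hc : c ∈ X
    · exact Or.inl ⟨c, hc, h.2.2, h.reachable⟩
    · rcases ih hc with ⟨x, hx, hxY, hr⟩ | hr
      · exact Or.inl ⟨x, hx, hxY, h.reachable.trans hr⟩
      · refine Or.inr (Reachable.trans (Adj.reachable ?_) hr)
        exact ⟨h.1, fun hm => hm.elim ha h.2.1, fun hm => hm.elim hc h.2.2⟩

/-- If `X` separates `T` from `S` and `Y` separates `T` from `X`, then `Y` separates
`T` from `S`. -/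
lemma isSep_trans {G : SimpleGraph V} {T S X Y : Set V}
    (hX : IsSep G T S X) (hY : IsSep G T X Y) : IsSep G T S Y := by
  rintro a ⟨haT, haY⟩ b ⟨hbS, hbY⟩ hr
  have haX : a ∉ X := by
    intro h
    exact hY a ⟨haT, haY⟩ a ⟨h, haY⟩ (Reachable.refl a)
  obtain ⟨w⟩ := hr
  rcases reach_split w haX with ⟨x, hxX, hxY, hr'⟩ | hr'
  · exact hY a ⟨haT, haY⟩ x ⟨hxX, hxY⟩ hr'
  · have haU : a ∉ X ∪ Y := fun hm => hm.elim haX haY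
    have hbU : b ∉ X ∪ Y := del_reach_not_mem hr' haU
    have hbX : b ∉ X := fun h => hbU (Or.inl h)
    exact hX a ⟨haT, haX⟩ b ⟨hbS, hbX⟩ (hr'.mono (del_mono Set.subset_union_left))

end ClosestCutAux

open ClosestCutAux in
/-- among all minimum `(T,S)`-vertex cuts there is a unique one `X` that is
closest to `T`, i.e., `X` is the unique minimum `(T,X)`-cut. -/
theorem closest_min_cut_exists_unique [Fintype V] [DecidableEq V]
    (G : SimpleGraph V) (T S : Set V) :
    ∃! X : Finset V,
      IsSep G T S ↑X ∧
      (∀ Y : Finset V, IsSep G T S ↑Y → X.card ≤ Y.card) ∧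
      (∀ Y : Finset V, IsSep G T ↑X ↑Y → X.card ≤ Y.card ∧ (Y.card = X.card → Y = X)) := by
  classical
  set N := Fintype.card V with hN
  obtain ⟨A₀, hA₀mem, hA₀min⟩ := Finset.exists_min_image
    (Finset.univ.filter (fun A : Finset V => ∀ s ∈ S, s ∉ A))
    (fun A => (bd G T A).card * (N + 1) + A.card)
    ⟨∅, by simp⟩
  have hgood : ∀ s ∈ S, s ∉ A₀ := (Finset.mem_filter.mp hA₀mem).2
  have hA₀min' : ∀ B : Finset V, (∀ s ∈ S, s ∉ B) →
      (bd G T A₀).card * (N + 1) + A₀.card ≤ (bd G T B).card * (N + 1) + B.card := by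
    intro B hB
    exact hA₀min B (Finset.mem_filter.mpr ⟨Finset.mem_univ _, hB⟩)
  have min1 : ∀ B : Finset V, (∀ s ∈ S, s ∉ B) → (bd G T A₀).card ≤ (bd G T B).card := by
    intro B hB
    by_contra hlt
    push_neg at hlt
    have h := hA₀min' B hB
    have h1 : B.card ≤ N := by
      rw [hN]; exact (Finset.card_le_univ B).trans (le_of_eq (Finset.card_univ))
    have h2 : (bd G T B).card + 1 ≤ (bd G T A₀).card := hlt
    have h3 : ((bd G T B).card + 1) * (N + 1) ≤ (bd G T A₀).card * (N + 1) :=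
      Nat.mul_le_mul_right _ h2
    have h4 : (bd G T B).card * (N + 1) + B.card < ((bd G T B).card + 1) * (N + 1) := by
      rw [add_mul, one_mul]; omega
    omega
  have min2 : ∀ B : Finset V, (∀ s ∈ S, s ∉ B) →
      (bd G T B).card = (bd G T A₀).card → A₀.card ≤ B.card := by
    intro B hB heq
    have h := hA₀min' B hB
    rw [heq] at h
    omega
  have hXsep : IsSep G T S ↑(bd G T A₀) := bd_isSep hgood
  have hmin : ∀ Y : Finset V, IsSep G T S ↑Y → (bd G T A₀).card ≤ Y.card := by
    intro Y hY
    exact (min1 (rset G T Y) (rset_good hY)).trans (Finset.card_le_card bd_rset_subset)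
  -- key structural fact about minimum separators
  have key : ∀ Y : Finset V, IsSep G T S ↑Y → Y.card = (bd G T A₀).card →
      A₀ ⊆ rset G T Y ∧ bd G T (rset G T Y) = Y := by
    intro Y hY hcard
    have hBgood : ∀ s ∈ S, s ∉ rset G T Y := rset_good hY
    have h1 : (bd G T A₀).card ≤ (bd G T (rset G T Y)).card := min1 _ hBgood
    have h2 : (bd G T (rset G T Y)).card ≤ Y.card := Finset.card_le_card bd_rset_subset
    have hbdB : bd G T (rset G T Y) = Y :=
      Finset.eq_of_subset_of_card_le bd_rset_subset (by omega)
    have hCgood : ∀ s ∈ S, s ∉ A₀ ∩ rset G T Y :=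
      fun s hs h => hgood s hs (Finset.mem_inter.mp h).1
    have hDgood : ∀ s ∈ S, s ∉ A₀ ∪ rset G T Y :=
      fun s hs h => (Finset.mem_union.mp h).elim (hgood s hs) (hBgood s hs)
    have hsm := bd_submod (G := G) (T := T) (A := A₀) (B := rset G T Y)
    have hC := min1 _ hCgood
    have hD := min1 _ hDgood
    have hBcard : (bd G T (rset G T Y)).card = (bd G T A₀).card := by
      rw [hbdB, hcard]
    have hCeq : (bd G T (A₀ ∩ rset G T Y)).card = (bd G T A₀).card := by omega
    have hle := min2 _ hCgood hCeq
    have hinter : A₀ ∩ rset G T Y = A₀ :=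
      Finset.eq_of_subset_of_card_le Finset.inter_subset_left hle
    exact ⟨Finset.inter_eq_left.mp hinter, hbdB⟩
  have hprop3 : ∀ Y : Finset V, IsSep G T ↑(bd G T A₀) ↑Y →
      (bd G T A₀).card ≤ Y.card ∧ (Y.card = (bd G T A₀).card → Y = bd G T A₀) := by
    intro Y hYX
    have hYsep : IsSep G T S ↑Y := isSep_trans hXsep hYX
    refine ⟨hmin Y hYsep, fun hcard => ?_⟩
    obtain ⟨hsubA, hbdB⟩ := key Y hYsep hcard
    have hXdisj : ∀ v ∈ bd G T A₀, v ∉ rset G T Y := by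
      intro v hvX hvB
      obtain ⟨a, haT, haY, hr⟩ := mem_rset.mp hvB
      exact hYX a ⟨haT, haY⟩ v ⟨hvX, rset_disj hvB⟩ hr
    have hXY : bd G T A₀ ⊆ Y := by
      intro v hv
      rw [← hbdB]
      obtain ⟨_, hcase⟩ := mem_bd.mp hv
      refine mem_bd.mpr ⟨hXdisj v hv, ?_⟩
      rcases hcase with hT | ⟨u, hu, hadj⟩
      · exact Or.inl hT
      · exact Or.inr ⟨u, hsubA hu, hadj⟩
    exact (Finset.eq_of_subset_of_card_le hXY hcard.le).symm
  refine ⟨bd G T A₀, ⟨hXsep, hmin, hprop3⟩, ?_⟩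
  rintro X' ⟨hX'sep, hX'min, hX'prop3⟩
  have hX'card : X'.card = (bd G T A₀).card :=
    le_antisymm (hX'min _ hXsep) (hmin X' hX'sep)
  obtain ⟨hsubA, _⟩ := key X' hX'sep hX'card
  have hdisj : ∀ v ∈ A₀, v ∉ X' := fun v hv => rset_disj (hsubA hv)
  have hsep' : IsSep G T ↑X' ↑(bd G T A₀) := by
    rintro a ⟨haT, haX⟩ b ⟨hbX', _⟩ hr
    have haA : a ∈ A₀ := by
      by_contra h
      exact haX (mem_bd.mpr ⟨h, Or.inl haT⟩)
    exact hdisj b (stay' hr haA) hbX'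
  exact ((hX'prop3 (bd G T A₀) hsep').2 hX'card.symm).symm
end

section
/- Let G be a finite undirected graph, t ∈ V(G) a terminal, and X a minimum vertex cut between N(t) and a set B' ⊆ V(G) that is closest to N(t). Let P be the component of G − X containing t. Then for any vertex set Q ⊆ V(G) with t ∈ Q and N_G(Q) disjoint from {t}: |N_G(Q)| ≥ |N_G(P ∪ Q)|. -/
variable {V : Type*}

/-- The exterior vertex boundary of `W`. -/
def extN (G : SimpleGraph V) (W : Set V) : Set V :=
  {v | v ∉ W ∧ ∃ w ∈ W, G.Adj w v}

/-- A walk in `G.del Y` starting in a set `W` closed under `G`-adjacency avoiding `Y`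
stays in `W`. -/
lemma walk_closed {G : SimpleGraph V} {Y W : Set V}
    (hcl : ∀ x ∈ W, ∀ y, G.Adj x y → y ∉ Y → y ∈ W) :
    ∀ {u v : V}, (G.del Y).Walk u v → u ∈ W → v ∈ W := by
  intro u v p
  induction p with
  | nil => exact id
  | cons h _ ih => intro hu; exact ih (hcl _ hu _ h.1 h.2.2)

/-- A walk in `G.del X` starting outside `X` ends outside `X`. -/
lemma del_walk_not_mem {G : SimpleGraph V} {X : Set V} :
    ∀ {u v : V}, (G.del X).Walk u v → u ∉ X → v ∉ X := by
  intro u v p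
  induction p with
  | nil => exact id
  | cons h _ ih => intro _; exact ih h.2.2

lemma extN_union_subset {G : SimpleGraph V} {A B : Set V} :
    extN G (A ∪ B) ∪ extN G (A ∩ B) ⊆ extN G A ∪ extN G B := by
  rintro v (⟨hv, w, hw, hadj⟩ | ⟨hv, w, hw, hadj⟩)
  · rcases hw with hw | hw
    · exact Or.inl ⟨fun h => hv (Or.inl h), w, hw, hadj⟩
    · exact Or.inr ⟨fun h => hv (Or.inr h), w, hw, hadj⟩
  · by_cases hvA : v ∈ A
    · exact Or.inr ⟨fun h => hv ⟨hvA, h⟩, w, hw.2, hadj⟩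
    · exact Or.inl ⟨hvA, w, hw.1, hadj⟩

lemma extN_inter_subset {G : SimpleGraph V} {A B : Set V} :
    extN G (A ∪ B) ∩ extN G (A ∩ B) ⊆ extN G A ∩ extN G B := by
  rintro v ⟨⟨hv, _⟩, ⟨_, w, hw, hadj⟩⟩
  exact ⟨⟨fun h => hv (Or.inl h), w, hw.1, hadj⟩,
    ⟨fun h => hv (Or.inr h), w, hw.2, hadj⟩⟩

lemma extN_submod [Fintype V] (G : SimpleGraph V) (A B : Set V) :
    (extN G (A ∪ B)).ncard + (extN G (A ∩ B)).ncard ≤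
      (extN G A).ncard + (extN G B).ncard := by
  have h1 := Set.ncard_le_ncard (extN_union_subset (G := G) (A := A) (B := B))
    (Set.toFinite _)
  have h2 := Set.ncard_le_ncard (extN_inter_subset (G := G) (A := A) (B := B))
    (Set.toFinite _)
  have e1 := Set.ncard_union_add_ncard_inter (extN G (A ∪ B)) (extN G (A ∩ B))
  have e2 := Set.ncard_union_add_ncard_inter (extN G A) (extN G B)
  omega

/-- let `X` be a minimum vertex cut between `N(t)` and `B'` that is closest
to `N(t)`, and let `P` be the component of `G − X` containing `t`. Then for every `Q`
with `t ∈ Q` and `N_G(Q)` disjoint from `{t}` it holds that `|N_G(Q)| ≥ |N_G(P ∪ Q)|`. -/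
theorem closest_cut_boundary [Fintype V] [DecidableEq V] (G : SimpleGraph V)
    (t : V) (B' : Set V) (X : Finset V)
    (hXsep : IsSep G (G.neighborSet t) B' ↑X)
    (hXmin : ∀ Y : Finset V, IsSep G (G.neighborSet t) B' ↑Y → X.card ≤ Y.card)
    (hXclosest : ∀ Y : Finset V, IsSep G (G.neighborSet t) ↑X ↑Y →
      X.card ≤ Y.card ∧ (Y.card = X.card → Y = X))
    (P : Set V) (hP : P = {v | (G.del ↑X).Reachable t v})
    (Q : Set V) (ht : t ∈ Q) (htN : t ∉ extN G Q) :
    (extN G (P ∪ Q)).ncard ≤ (extN G Q).ncard := by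
  classical
  by_cases htX : t ∈ (X : Set V)
  · -- degenerate case: P = {t} ⊆ Q
    have hPt : P = {t} := by
      subst hP
      ext v
      constructor
      · rintro ⟨p⟩
        cases p with
        | nil => rfl
        | cons h _ => exact absurd htX h.2.1
      · rintro rfl
        exact SimpleGraph.Reachable.refl _
    have : P ∪ Q = Q := by
      rw [hPt, Set.union_eq_self_of_subset_left (Set.singleton_subset_iff.mpr ht)]
    rw [this]
  · -- main case: t ∉ X
    have htP : t ∈ P := by rw [hP]; exact SimpleGraph.Reachable.refl t
    -- every vertex of P is outside X
    have hPX : ∀ v ∈ P, v ∉ (X : Set V) := by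
      intro v hv
      rw [hP] at hv
      obtain ⟨p⟩ := hv
      exact del_walk_not_mem p htX
    -- extN G P ⊆ X
    have hNP : extN G P ⊆ (X : Set V) := by
      rintro v ⟨hv, w, hw, hadj⟩
      by_contra hvX
      apply hv
      rw [hP] at hw ⊢
      exact hw.trans (SimpleGraph.Adj.reachable ⟨hadj, hPX w (hP ▸ hw), hvX⟩)
    set W : Set V := P ∩ Q with hW
    set Y : Set V := extN G W with hY
    -- closure property of W w.r.t. Y
    have hcl : ∀ x ∈ W, ∀ y, G.Adj x y → y ∉ Y → y ∈ W := by
      intro x hx y hadj hyY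
      by_contra hyW
      exact hyY ⟨hyW, x, hx, hadj⟩
    -- Y separates N(t) from X
    have hsep : IsSep G (G.neighborSet t) (↑X) ↑Y.toFinset := by
      intro a ha b hb hr
      rw [Set.coe_toFinset] at ha hb hr
      have haW : a ∈ W := hcl t ⟨htP, ht⟩ a ha.1 ha.2
      obtain ⟨p⟩ := hr
      have hbW : b ∈ W := walk_closed hcl p haW
      exact hPX b hbW.1 hb.1
    have hXY : X.card ≤ (extN G (P ∩ Q)).ncard := by
      have := (hXclosest Y.toFinset hsep).1
      exact le_of_le_of_eq this (Set.ncard_eq_toFinset_card' Y).symm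
    have hPcard : (extN G P).ncard ≤ X.card := by
      have := Set.ncard_le_ncard hNP (Set.toFinite _)
      rwa [Set.ncard_coe_finset] at this
    have hsub := extN_submod G P Q
    omega
end
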